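/- Let ω₁(x,y) = x²·cos y − y·sin y + y²·sin x + x·cos x, ω₂(x,y) = 4(y·cos x + x·sin y), and let Q be as specified (with real constant C). Then θ₁ := Q/ω₁ satisfies, on the open set where ω₁ ≠ 0, the Moutard system (ω₁θ₁)_x = −ω₁²(ω₂/ω₁)_y and (ω₁θ₁)_y = ω₁²(ω₂/ω₁)_x. -/

import Mathlib

noncomputable def pdx (f : ℝ → ℝ → ℝ) : ℝ → ℝ → ℝ := fun x y => deriv (fun t => f t y) x
noncomputable def pdy (f : ℝ → ℝ → ℝ) : ℝ → ℝ → ℝ := fun x y => deriv (fun t => f x t) y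
noncomputable def lap (f : ℝ → ℝ → ℝ) : ℝ → ℝ → ℝ :=
  fun x y => pdx (pdx f) x y + pdy (pdy f) x y

noncomputable def Q (C x y : ℝ) : ℝ :=
  -x ^ 4 - y ^ 4 - 4 * x ^ 2 * y * Real.sin x * Real.sin y
  + x ^ 2 * (-8 * Real.cos y * Real.sin x - 2 * (Real.sin y) ^ 2 - 1)
  + 4 * x * y ^ 2 * Real.cos x * Real.cos y
  - 16 * x * y * Real.cos x * Real.sin y
  + 2 * x * Real.cos x * (-8 * Real.cos y - Real.sin x)
  + y ^ 2 * (-8 * Real.cos y * Real.sin x + 2 * (Real.sin x) ^ 2 - 3)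
  + 2 * y * Real.sin y * (Real.cos y + 8 * Real.sin x)
  + 16 * Real.cos y * Real.sin x + (Real.sin x) ^ 2 - (Real.sin y) ^ 2
  + 4 * C + 1

noncomputable def ω₁ (x y : ℝ) : ℝ :=
  x ^ 2 * Real.cos y - y * Real.sin y + y ^ 2 * Real.sin x + x * Real.cos x

noncomputable def ω₂ (x y : ℝ) : ℝ := 4 * (y * Real.cos x + x * Real.sin y)

/-!
Near a point where `ω₁ ≠ 0`, the function `ω₁ * (Q / ω₁)` agrees with `Q`, and by the quotient
rule `ω₁² (ω₂ / ω₁)' = ω₂' ω₁ - ω₂ ω₁'`. The system therefore reduces to the identities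
`Q_x = -(ω₂_y ω₁ - ω₂ ω₁_y)` and `Q_y = ω₂_x ω₁ - ω₂ ω₁_x` between explicit trigonometric
polynomials, which hold modulo `sin² + cos² = 1`.
-/

open Real

section Quotient

variable {𝕜 : Type*} [NontriviallyNormedField 𝕜] {f g : 𝕜 → 𝕜} {x : 𝕜}

theorem deriv_mul_div_cancel_of_ne (hg : ContinuousAt g x) (hx : g x ≠ 0) :
    deriv (fun t => g t * (f t / g t)) x = deriv f x := by
  refine Filter.EventuallyEq.deriv_eq ?_
  filter_upwards [hg.eventually_ne hx] with t ht
  exact mul_div_cancel₀ (f t) ht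

theorem sq_mul_deriv_div (hf : DifferentiableAt 𝕜 f x) (hg : DifferentiableAt 𝕜 g x)
    (hx : g x ≠ 0) :
    g x ^ 2 * deriv (fun t => f t / g t) x = deriv f x * g x - f x * deriv g x := by
  rw [deriv_fun_div hf hg hx, mul_div_cancel₀ _ (pow_ne_zero 2 hx)]

end Quotient

theorem deriv_Q_fst (C x y : ℝ) :
    deriv (fun t => Q C t y) x =
      -(deriv (fun t => ω₂ x t) y * ω₁ x y - ω₂ x y * deriv (fun t => ω₁ x t) y) := by
  simp (disch := fun_prop) only [Q, ω₁, ω₂, deriv_fun_add, deriv_fun_sub, deriv_fun_mul,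
    deriv.fun_neg, deriv_fun_pow, Real.deriv_sin, Real.deriv_cos, deriv_const, deriv_id'',
    deriv_const_mul_id']
  linear_combination (2 * x) * sin_sq_add_cos_sq x + (4 * x ^ 3) * sin_sq_add_cos_sq y

theorem deriv_Q_snd (C x y : ℝ) :
    deriv (fun t => Q C x t) y =
      deriv (fun t => ω₂ t y) x * ω₁ x y - ω₂ x y * deriv (fun t => ω₁ t y) x := by
  simp (disch := fun_prop) only [Q, ω₁, ω₂, deriv_fun_add, deriv_fun_sub, deriv_fun_mul,
    deriv.fun_neg, deriv_fun_pow, Real.deriv_sin, Real.deriv_cos, deriv_const, deriv_id'',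
    deriv_const_mul_id']
  linear_combination (4 * y + 4 * y ^ 3) * sin_sq_add_cos_sq x + (2 * y) * sin_sq_add_cos_sq y

theorem theta1_satisfies_moutard_system (C : ℝ) :
    ∀ x y : ℝ, ω₁ x y ≠ 0 →
      pdx (fun a b => ω₁ a b * (Q C a b / ω₁ a b)) x y =
        -(ω₁ x y) ^ 2 * pdy (fun s t => ω₂ s t / ω₁ s t) x y ∧
      pdy (fun a b => ω₁ a b * (Q C a b / ω₁ a b)) x y =
        (ω₁ x y) ^ 2 * pdx (fun s t => ω₂ s t / ω₁ s t) x y := by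
  intro x y hω
  have hω₁x : Differentiable ℝ (fun t => ω₁ t y) := by unfold ω₁; fun_prop
  have hω₁y : Differentiable ℝ (fun t => ω₁ x t) := by unfold ω₁; fun_prop
  have hω₂x : Differentiable ℝ (fun t => ω₂ t y) := by unfold ω₂; fun_prop
  have hω₂y : Differentiable ℝ (fun t => ω₂ x t) := by unfold ω₂; fun_prop
  constructor
  · rw [pdx, pdy, deriv_mul_div_cancel_of_ne (hω₁x x).continuousAt hω, neg_mul,
      sq_mul_deriv_div (hω₂y y) (hω₁y y) hω, deriv_Q_fst]
  · rw [pdx, pdy, deriv_mul_div_cancel_of_ne (hω₁y y).continuousAt hω,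
      sq_mul_deriv_div (hω₂x x) (hω₁x x) hω, deriv_Q_snd]
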